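/- Let h(z) = Σ_{n≥1} a_n z^n and g(z) = Σ_{n≥1} b_n z^n be holomorphic on the unit disk D with ||a_1| − |b_1|| ≥ 1/√(K+K'), and suppose |h'(z)| + |g'(z)| ≤ Λ₁ for all z ∈ D, where Λ₁ ≥ √(K+K') ≥ 1. Then for each n ≥ 2, |a_n| + |b_n| ≤ ((K+K')Λ₁² − 1)/(n(K+K')Λ₁). -/

import Mathlib

/-!
Rotate `g` so that the phases of the `n`-th coefficients align: for a suitable `|u| = 1` the
function `H = h + u g` has `n`-th coefficient of modulus `|a_n| + |b_n|` and first coefficient of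
modulus at least `||a_1| - |b_1||`, while `|H'| ≤ |h'| + |g'| ≤ Λ₁`. Wiener's inequality
`|c_m| ≤ 1 - |c_0|²` for the coefficients of a holomorphic self-map of the disk, applied to
`H' / Λ₁`, then gives the bound. Wiener's inequality itself follows from Schwarz–Pick at the
origin, applied to the average of `φ(ζʲ z)` over the `m`-th roots of unity `ζʲ`, which is a
power series in `z^m`.
-/

open Metric Complex Set Filter FormalMultilinearSeries ComplexConjugate
open scoped NNReal ENNReal

theorem hasFPowerSeriesOnBall_ofScalars_iff {f : ℂ → ℂ} {c : ℕ → ℂ} {r : ℝ≥0} (hr : 0 < r) :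
    HasFPowerSeriesOnBall f (ofScalars ℂ c) 0 r ↔
      ∀ z ∈ ball (0 : ℂ) r, HasSum (fun n ↦ c n * z ^ n) (f z) := by
  constructor
  · intro hf z hz
    simpa [ofScalars_apply_eq, mul_comm] using hf.hasSum (y := z) (by rwa [eball_coe])
  · intro hf
    refine ⟨ENNReal.le_of_forall_nnreal_lt fun ρ hρ ↦ ?_, ENNReal.coe_pos.2 hr, fun {y} hy ↦ ?_⟩
    · have hρ' : ((ρ : ℝ) : ℂ) ∈ ball (0 : ℂ) r := by
        simpa using ENNReal.coe_lt_coe.1 hρ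
      refine (ofScalars ℂ c).le_radius_of_tendsto (l := 0) ?_
      simpa [ofScalars_norm] using (hf _ hρ').summable.tendsto_atTop_zero.norm
    · simpa [ofScalars_apply_eq, mul_comm] using hf y (by rwa [← eball_coe])

theorem HasFPowerSeriesOnBall.deriv_ofScalars {f : ℂ → ℂ} {c : ℕ → ℂ} {z : ℂ} {r : ℝ≥0∞}
    (hf : HasFPowerSeriesOnBall f (ofScalars ℂ c) z r) :
    HasFPowerSeriesOnBall (deriv f) (ofScalars ℂ fun n ↦ (n + 1) * c (n + 1)) z r := by
  convert (ContinuousLinearMap.apply ℂ ℂ (1 : ℂ)).comp_hasFPowerSeriesOnBall hf.fderiv using 1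
  · ext n; simp
  · ext n : 1
    rw [← mkPiRing_coeff_eq (ofScalars ℂ _),
      ← mkPiRing_coeff_eq (ContinuousLinearMap.compFormalMultilinearSeries _ _), coeff_ofScalars]
    simp only [coeff, ContinuousLinearMap.compFormalMultilinearSeries_apply]
    simp [nsmul_eq_mul]

theorem IsPrimitiveRoot.sum_pow_pow_eq {R : Type*} [CommRing R] [IsDomain R] {ζ : R} {m : ℕ}
    (hζ : IsPrimitiveRoot ζ m) (n : ℕ) :
    ∑ j ∈ Finset.range m, (ζ ^ n) ^ j = if m ∣ n then (m : R) else 0 := by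
  split_ifs with hmn
  · simp [(hζ.pow_eq_one_iff_dvd n).2 hmn]
  · have hne : ζ ^ n - 1 ≠ 0 := sub_ne_zero.2 fun h ↦ hmn ((hζ.pow_eq_one_iff_dvd n).1 h)
    refine (mul_eq_zero.1 ?_).resolve_right hne
    rw [geom_sum_mul, ← pow_mul, mul_comm, pow_mul, hζ.pow_eq_one, one_pow, sub_self]

theorem norm_sub_le_norm_one_sub_conj_mul {a w : ℂ} (ha : ‖a‖ ≤ 1) (hw : ‖w‖ ≤ 1) :
    ‖a - w‖ ≤ ‖1 - conj a * w‖ := by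
  have key : normSq (1 - conj a * w) - normSq (a - w) = (1 - normSq a) * (1 - normSq w) := by
    simp only [normSq_apply, sub_re, sub_im, mul_re, mul_im, one_re, one_im, conj_re, conj_im]
    ring
  rw [← sq_le_sq₀ (norm_nonneg _) (norm_nonneg _), Complex.sq_norm, Complex.sq_norm]
  rw [← sq_le_one_iff₀ (norm_nonneg _), Complex.sq_norm] at ha hw
  nlinarith [key, normSq_nonneg a, normSq_nonneg w]

theorem norm_deriv_zero_le_one_sub_sq_of_norm_lt_one {f : ℂ → ℂ}
    (hd : DifferentiableOn ℂ f (ball 0 1)) (hf : MapsTo f (ball 0 1) (closedBall 0 1))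
    (hf0 : ‖f 0‖ < 1) : ‖deriv f 0‖ ≤ 1 - ‖f 0‖ ^ 2 := by
  set a := f 0
  have hden : ∀ z ∈ ball (0 : ℂ) 1, 1 - conj a * f z ≠ 0 := by
    refine fun z hz ↦ sub_ne_zero.2 fun h ↦ ?_
    have : ‖conj a * f z‖ < 1 := by
      rw [norm_mul, RCLike.norm_conj]
      exact mul_lt_one_of_nonneg_of_lt_one_left (norm_nonneg _) hf0 (by simpa using hf hz)
    simp [← h] at this
  -- the Möbius automorphism of the disk sending `a` to `0`, composed with `f`
  set g : ℂ → ℂ := fun z ↦ (a - f z) / (1 - conj a * f z)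
  have hgd : DifferentiableOn ℂ g (ball 0 1) :=
    ((differentiableOn_const a).sub hd).div ((differentiableOn_const 1).sub
      ((differentiableOn_const _).mul hd)) hden
  have hg : MapsTo g (ball 0 1) (closedBall (g 0) 1) := by
    intro z hz
    rw [mem_closedBall, show g 0 = 0 by simp [g, a], dist_zero_right, norm_div,
      div_le_one (norm_pos_iff.2 (hden z hz))]
    exact norm_sub_le_norm_one_sub_conj_mul hf0.le (by simpa using hf hz)
  have h0 : (0 : ℂ) ∈ ball (0 : ℂ) 1 := mem_ball_self one_pos
  have hpos : 0 < 1 - ‖a‖ ^ 2 := by nlinarith [norm_nonneg a]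
  have hderiv : HasDerivAt g (-deriv f 0 / (1 - ‖a‖ ^ 2 : ℝ)) 0 := by
    have hf' := (hd.differentiableAt (isOpen_ball.mem_nhds h0)).hasDerivAt
    refine (((hasDerivAt_const 0 a).sub hf').div ((hasDerivAt_const 0 1).sub
      (hf'.const_mul _)) (hden 0 h0)).congr_deriv ?_
    simp only [Pi.sub_apply, show f 0 = a from rfl, sub_self, zero_mul, sub_zero, zero_sub,
      conj_mul']
    push_cast
    field_simp
  have := norm_deriv_le_div_of_mapsTo_ball hgd hg one_pos
  rwa [hderiv.deriv, norm_div, norm_neg, norm_real, Real.norm_of_nonneg hpos.le, div_one,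
    div_le_one hpos] at this

theorem norm_deriv_zero_le_one_sub_sq {f : ℂ → ℂ}
    (hd : DifferentiableOn ℂ f (ball 0 1)) (hf : MapsTo f (ball 0 1) (closedBall 0 1)) :
    ‖deriv f 0‖ ≤ 1 - ‖f 0‖ ^ 2 := by
  have h0 : (0 : ℂ) ∈ ball (0 : ℂ) 1 := mem_ball_self one_pos
  rcases (mem_closedBall_zero_iff.1 (hf h0)).lt_or_eq with hlt | heq
  · exact norm_deriv_zero_le_one_sub_sq_of_norm_lt_one hd hf hlt
  have hconst : EqOn f (Function.const ℂ (f 0)) (ball 0 1) :=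
    eqOn_of_isPreconnected_of_isMaxOn_norm (convex_ball _ _).isPreconnected isOpen_ball hd h0
      fun z hz ↦ by simpa [heq] using hf hz
  have hder : deriv f 0 = 0 :=
    (eventuallyEq_of_mem (isOpen_ball.mem_nhds h0) hconst).deriv_eq.trans (deriv_const 0 (f 0))
  simp [hder, heq]

theorem hasSum_deriv_of_hasSum_mul_pow {f : ℂ → ℂ} {c : ℕ → ℂ} {r : ℝ} (hr : 0 < r)
    (hf : ∀ z ∈ ball (0 : ℂ) r, HasSum (fun n ↦ c n * z ^ n) (f z)) :
    ∀ z ∈ ball (0 : ℂ) r, HasSum (fun n ↦ (n + 1) * c (n + 1) * z ^ n) (deriv f z) :=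
  (hasFPowerSeriesOnBall_ofScalars_iff (r := ⟨r, hr.le⟩) hr).1
    ((hasFPowerSeriesOnBall_ofScalars_iff (r := ⟨r, hr.le⟩) hr).2 hf).deriv_ofScalars

theorem norm_coeff_one_le_one_sub_sq {f : ℂ → ℂ} {c : ℕ → ℂ}
    (hf : ∀ z ∈ ball (0 : ℂ) 1, HasSum (fun n ↦ c n * z ^ n) (f z))
    (hb : MapsTo f (ball 0 1) (closedBall 0 1)) : ‖c 1‖ ≤ 1 - ‖c 0‖ ^ 2 := by
  have hps : HasFPowerSeriesOnBall f (ofScalars ℂ c) 0 (1 : ℝ≥0) :=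
    (hasFPowerSeriesOnBall_ofScalars_iff one_pos).2 (by simpa using hf)
  have hd : DifferentiableOn ℂ f (ball 0 1) := by
    simpa only [eball_coe, NNReal.coe_one] using hps.differentiableOn
  have h := norm_deriv_zero_le_one_sub_sq hd hb
  rwa [hps.hasFPowerSeriesAt.deriv, ← hps.coeff_zero (fun _ ↦ 1), ofScalars_apply_eq,
    ofScalars_apply_eq, pow_one, pow_zero, smul_eq_mul, smul_eq_mul, mul_one, mul_one] at h

theorem IsPrimitiveRoot.hasSum_average_rotate {ζ : ℂ} {m : ℕ} (hζ : IsPrimitiveRoot ζ m)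
    (hm : m ≠ 0) {c : ℕ → ℂ} {z : ℂ} {s : ℕ → ℂ}
    (hs : ∀ j, HasSum (fun n ↦ c n * (ζ ^ j * z) ^ n) (s j)) :
    HasSum (fun k ↦ c (k * m) * (z ^ m) ^ k) ((m : ℂ)⁻¹ * ∑ j ∈ Finset.range m, s j) := by
  have hsum := hasSum_sum fun j (_ : j ∈ Finset.range m) ↦ (hs j).mul_left (m : ℂ)⁻¹
  have hterm : ∀ n, ∑ j ∈ Finset.range m, (m : ℂ)⁻¹ * (c n * (ζ ^ j * z) ^ n) =
      if m ∣ n then c n * z ^ n else 0 := by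
    intro n
    have : ∀ j, (m : ℂ)⁻¹ * (c n * (ζ ^ j * z) ^ n) = (m : ℂ)⁻¹ * (c n * z ^ n) * (ζ ^ n) ^ j :=
      fun j ↦ by ring
    simp_rw [this, ← Finset.mul_sum, hζ.sum_pow_pow_eq]
    split_ifs
    · field_simp
    · rw [mul_zero]
  simp_rw [hterm] at hsum
  rw [Finset.mul_sum]
  have hinj : Function.Injective (· * m) := fun _ _ h ↦ Nat.eq_of_mul_eq_mul_right
    (Nat.pos_of_ne_zero hm) h
  refine ((hinj.hasSum_iff fun n hn ↦ if_neg fun ⟨k, hk⟩ ↦ hn ⟨k, by simp [hk, mul_comm]⟩).2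
    hsum).congr_fun fun k ↦ ?_
  simp [← pow_mul, mul_comm]

theorem norm_coeff_le_one_sub_sq {f : ℂ → ℂ} {c : ℕ → ℂ}
    (hf : ∀ z ∈ ball (0 : ℂ) 1, HasSum (fun n ↦ c n * z ^ n) (f z))
    (hb : MapsTo f (ball 0 1) (closedBall 0 1)) {m : ℕ} (hm : m ≠ 0) :
    ‖c m‖ ≤ 1 - ‖c 0‖ ^ 2 := by
  obtain ⟨ζ, hζ⟩ : ∃ ζ : ℂ, IsPrimitiveRoot ζ m := ⟨_, isPrimitiveRoot_exp m hm⟩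
  have hrot : ∀ z ∈ ball (0 : ℂ) 1, ∀ j : ℕ, ζ ^ j * z ∈ ball (0 : ℂ) 1 := fun z hz j ↦ by
    simpa [hζ.norm'_eq_one hm] using hz
  have havg : ∀ w ∈ ball (0 : ℂ) 1,
      ∃ S, HasSum (fun k ↦ c (k * m) * w ^ k) S ∧ ‖S‖ ≤ 1 := by
    intro w hw
    obtain ⟨z, rfl⟩ := IsAlgClosed.exists_pow_nat_eq w (Nat.pos_of_ne_zero hm)
    have hz : z ∈ ball (0 : ℂ) 1 := by
      simpa [norm_pow, pow_lt_one_iff_of_nonneg (norm_nonneg z) hm] using hw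
    refine ⟨_, hζ.hasSum_average_rotate hm fun j ↦ hf _ (hrot z hz j), ?_⟩
    have hsum : ‖∑ j ∈ Finset.range m, f (ζ ^ j * z)‖ ≤ m :=
      (norm_sum_le _ _).trans <| (Finset.sum_le_sum fun j _ ↦
        mem_closedBall_zero_iff.1 (hb (hrot z hz j))).trans_eq (by simp)
    rw [norm_mul, norm_inv, Complex.norm_natCast]
    exact inv_mul_le_one_of_le₀ hsum (Nat.cast_nonneg m)
  have hχ : ∀ w ∈ ball (0 : ℂ) 1,
      HasSum (fun k ↦ c (k * m) * w ^ k) (∑' k, c (k * m) * w ^ k) := fun w hw ↦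
    (havg w hw).choose_spec.1.summable.hasSum
  have hχb : MapsTo (fun w ↦ ∑' k, c (k * m) * w ^ k) (ball 0 1) (closedBall 0 1) :=
    fun w hw ↦ by
      obtain ⟨S, hS, hS1⟩ := havg w hw
      simpa [hS.tsum_eq] using hS1
  simpa using norm_coeff_one_le_one_sub_sq hχ hχb

theorem norm_coeff_le_sub_sq_div {f : ℂ → ℂ} {c : ℕ → ℂ} {M : ℝ} (hM : 0 < M)
    (hf : ∀ z ∈ ball (0 : ℂ) 1, HasSum (fun n ↦ c n * z ^ n) (f z))
    (hb : MapsTo f (ball 0 1) (closedBall 0 M)) {m : ℕ} (hm : m ≠ 0) :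
    ‖c m‖ ≤ M - ‖c 0‖ ^ 2 / M := by
  have h := norm_coeff_le_one_sub_sq (f := fun z ↦ f z / M) (c := fun n ↦ c n / M)
    (fun z hz ↦ by simpa only [div_mul_eq_mul_div] using (hf z hz).div_const (M : ℂ))
    (fun z hz ↦ by
      simpa [norm_div, abs_of_pos hM, div_le_one hM] using hb hz) hm
  simp only [norm_div, norm_real, Real.norm_of_nonneg hM.le] at h
  rw [div_le_iff₀ hM] at h
  calc ‖c m‖ ≤ (1 - (‖c 0‖ / M) ^ 2) * M := h
    _ = M - ‖c 0‖ ^ 2 / M := by field_simp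

theorem Complex.exists_norm_eq_one_norm_add_mul_eq (a b : ℂ) :
    ∃ u : ℂ, ‖u‖ = 1 ∧ ‖a + u * b‖ = ‖a‖ + ‖b‖ := by
  refine ⟨exp ((arg a - arg b : ℝ) * I), norm_exp_ofReal_mul_I _, ?_⟩
  have hrot : exp ((arg a - arg b : ℝ) * I) * exp (arg b * I) = exp (arg a * I) := by
    rw [← exp_add]; push_cast; ring_nf
  have h : a + exp ((arg a - arg b : ℝ) * I) * b = (‖a‖ + ‖b‖ : ℝ) * exp (arg a * I) := by
    calc a + exp ((arg a - arg b : ℝ) * I) * b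
        = ‖a‖ * exp (arg a * I) + exp ((arg a - arg b : ℝ) * I) * (‖b‖ * exp (arg b * I)) := by
          rw [norm_mul_exp_arg_mul_I, norm_mul_exp_arg_mul_I]
      _ = (‖a‖ + ‖b‖ : ℝ) * exp (arg a * I) := by
          rw [ofReal_add]; linear_combination (‖b‖ : ℂ) * hrot
  rw [h, norm_mul, norm_exp_ofReal_mul_I, mul_one, norm_real,
    Real.norm_of_nonneg (by positivity)]

theorem abs_norm_sub_norm_le_norm_add_mul {𝕜 : Type*} [NormedDivisionRing 𝕜] {u : 𝕜}
    (hu : ‖u‖ = 1) (a b : 𝕜) : |‖a‖ - ‖b‖| ≤ ‖a + u * b‖ := calc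
  |‖a‖ - ‖b‖| = |‖a‖ - ‖-(u * b)‖| := by rw [norm_neg, norm_mul, hu, one_mul]
  _ ≤ ‖a - -(u * b)‖ := abs_norm_sub_norm_le _ _
  _ = ‖a + u * b‖ := by rw [sub_neg_eq_add]

theorem succ_mul_norm_coeff_add_mul_le {h g : ℂ → ℂ} {a b : ℕ → ℂ} {Λ : ℝ} (hΛ : 0 < Λ)
    (hsa : ∀ z ∈ ball (0 : ℂ) 1, HasSum (fun n ↦ a n * z ^ n) (h z))
    (hsb : ∀ z ∈ ball (0 : ℂ) 1, HasSum (fun n ↦ b n * z ^ n) (g z))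
    (hbd : ∀ z ∈ ball (0 : ℂ) 1, ‖deriv h z‖ + ‖deriv g z‖ ≤ Λ) {u : ℂ} (hu : ‖u‖ = 1)
    {m : ℕ} (hm : m ≠ 0) :
    (m + 1) * ‖a (m + 1) + u * b (m + 1)‖ ≤ Λ - ‖a 1 + u * b 1‖ ^ 2 / Λ := by
  have hs : ∀ z ∈ ball (0 : ℂ) 1, HasSum (fun k ↦ (k + 1) * (a (k + 1) + u * b (k + 1)) * z ^ k)
      (deriv h z + u * deriv g z) := fun z hz ↦ by
    convert (hasSum_deriv_of_hasSum_mul_pow one_pos hsa z hz).add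
      ((hasSum_deriv_of_hasSum_mul_pow one_pos hsb z hz).mul_left u) using 1
    ext k; ring
  have hb : MapsTo (fun z ↦ deriv h z + u * deriv g z) (ball 0 1) (closedBall 0 Λ) :=
    fun z hz ↦ mem_closedBall_zero_iff.2 <| (norm_add_le _ _).trans <| by
      simpa [hu] using hbd z hz
  have hW := norm_coeff_le_sub_sq_div hΛ hs hb hm
  rwa [norm_mul, show (m : ℂ) + 1 = (m + 1 : ℕ) by push_cast; rfl, Complex.norm_natCast,
    Nat.cast_zero, zero_add, one_mul, Nat.cast_succ] at hW

theorem stmt_10_general (h g : ℂ → ℂ) (a b : ℕ → ℂ) (K K' Λ₁ : ℝ)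
    (hsa : ∀ z ∈ ball (0 : ℂ) 1, HasSum (fun n : ℕ => a n * z ^ n) (h z))
    (hsb : ∀ z ∈ ball (0 : ℂ) 1, HasSum (fun n : ℕ => b n * z ^ n) (g z))
    (hKK' : 1 ≤ Real.sqrt (K + K'))
    (hΛ₁ : Real.sqrt (K + K') ≤ Λ₁)
    (h1 : 1 / Real.sqrt (K + K') ≤ |‖a 1‖ - ‖b 1‖|)
    (hbd : ∀ z ∈ ball (0 : ℂ) 1,
      ‖deriv h z‖ + ‖deriv g z‖ ≤ Λ₁) :
    ∀ n : ℕ, 2 ≤ n →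
      ‖a n‖ + ‖b n‖ ≤
        ((K + K') * Λ₁ ^ 2 - 1) / (n * (K + K') * Λ₁) := by
  intro n hn
  obtain ⟨m, rfl⟩ : ∃ m, n = m + 1 := ⟨n - 1, by omega⟩
  have hK : 0 < K + K' := Real.sqrt_pos.1 (one_pos.trans_le hKK')
  have hΛ : 0 < Λ₁ := one_pos.trans_le (hKK'.trans hΛ₁)
  obtain ⟨u, hu, hun⟩ := exists_norm_eq_one_norm_add_mul_eq (a (m + 1)) (b (m + 1))
  have hW := succ_mul_norm_coeff_add_mul_le hΛ hsa hsb hbd hu (by omega : m ≠ 0)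
  rw [hun] at hW
  have hc1 : 1 ≤ (K + K') * ‖a 1 + u * b 1‖ ^ 2 := by
    have := pow_le_pow_left₀ (by positivity)
      (h1.trans (abs_norm_sub_norm_le_norm_add_mul hu (a 1) (b 1))) 2
    rw [div_pow, Real.sq_sqrt hK.le, one_pow, div_le_iff₀ hK] at this
    linarith
  rw [le_div_iff₀ (by positivity), Nat.cast_succ]
  calc (‖a (m + 1)‖ + ‖b (m + 1)‖) * ((m + 1) * (K + K') * Λ₁)
      = (m + 1) * (‖a (m + 1)‖ + ‖b (m + 1)‖) * ((K + K') * Λ₁) := by ring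
    _ ≤ (Λ₁ - ‖a 1 + u * b 1‖ ^ 2 / Λ₁) * ((K + K') * Λ₁) := by gcongr
    _ = (K + K') * Λ₁ ^ 2 - (K + K') * ‖a 1 + u * b 1‖ ^ 2 := by field_simp
    _ ≤ (K + K') * Λ₁ ^ 2 - 1 := by linarith

theorem stmt_10 (h g : ℂ → ℂ) (a b : ℕ → ℂ) (K K' Λ₁ : ℝ)
    (hh : DifferentiableOn ℂ h (ball (0 : ℂ) 1))
    (hg : DifferentiableOn ℂ g (ball (0 : ℂ) 1))
    (ha0 : a 0 = 0) (hb0 : b 0 = 0)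
    (hsa : ∀ z ∈ ball (0 : ℂ) 1, HasSum (fun n : ℕ => a n * z ^ n) (h z))
    (hsb : ∀ z ∈ ball (0 : ℂ) 1, HasSum (fun n : ℕ => b n * z ^ n) (g z))
    (hKK' : 1 ≤ Real.sqrt (K + K'))
    (hΛ₁ : Real.sqrt (K + K') ≤ Λ₁)
    (h1 : 1 / Real.sqrt (K + K') ≤ |‖a 1‖ - ‖b 1‖|)
    (hbd : ∀ z ∈ ball (0 : ℂ) 1,
      ‖deriv h z‖ + ‖deriv g z‖ ≤ Λ₁) :
    ∀ n : ℕ, 2 ≤ n →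
      ‖a n‖ + ‖b n‖ ≤
        ((K + K') * Λ₁ ^ 2 - 1) / (n * (K + K') * Λ₁) :=
  stmt_10_general h g a b K K' Λ₁ hsa hsb hKK' hΛ₁ h1 hbd
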